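/- For every γ > 0: lim_{n→∞} n^{2β} ∑_{j=m₁}^{m₂} [ (Δλ_j)³ + (Δt_j)² + (1 + λ_{j−1}^{−γ})⁴ (Δλ_j)⁴ ] = 0. -/

import Mathlib

/-- λ₀ = ρ √n · 2√μ/(μ+1). -/
noncomputable def lam0 (μ ρ : ℝ) (n : ℕ) : ℝ :=
  ρ * Real.sqrt n * (2 * Real.sqrt μ / (μ + 1))

/-- Trading times t_j = 1 − (1 − j/n)^μ. -/
noncomputable def tradeT (μ : ℝ) (n j : ℕ) : ℝ :=
  1 - (1 - (j : ℝ) / n) ^ μ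

/-- λ_j = λ₀ (1 − j/n)^{(μ+1)/2}. -/
noncomputable def lamJ (μ ρ : ℝ) (n j : ℕ) : ℝ :=
  lam0 μ ρ n * (1 - (j : ℝ) / n) ^ ((μ + 1) / 2)

/-- Δλ_j = λ_{j−1} − λ_j. -/
noncomputable def dLam (μ ρ : ℝ) (n j : ℕ) : ℝ :=
  lamJ μ ρ n (j - 1) - lamJ μ ρ n j

/-- Δt_j = t_j − t_{j−1}. -/
noncomputable def dT (μ : ℝ) (n j : ℕ) : ℝ :=
  tradeT μ n j - tradeT μ n (j - 1)

/-- l_* = (log n)^{−3}. -/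
noncomputable def lStar (n : ℕ) : ℝ := ((Real.log n) ^ (3 : ℕ))⁻¹

/-- l^* = (log n)^3. -/
noncomputable def lUpStar (n : ℕ) : ℝ := (Real.log n) ^ (3 : ℕ)

/-- m₁ = n − ⌊n (l^*/λ₀)^{2/(μ+1)}⌋. -/
noncomputable def mLow (μ ρ : ℝ) (n : ℕ) : ℕ :=
  n - ⌊(n : ℝ) * (lUpStar n / lam0 μ ρ n) ^ ((2 : ℝ) / (μ + 1))⌋₊

/-- m₂ = n − ⌊n (l_*/λ₀)^{2/(μ+1)}⌋. -/
noncomputable def mUp (μ ρ : ℝ) (n : ℕ) : ℕ :=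
  n - ⌊(n : ℝ) * (lStar n / lam0 μ ρ n) ^ ((2 : ℝ) / (μ + 1))⌋₊

/-!
Both increments are steps of a profile `x ↦ (1 - x)^p` with `p ≥ 1` over a mesh `1/n`, so
`Δt_j ≤ μ/n` and `Δλ_j ≤ λ₀ (μ+1)/(2n) = ρ√μ/√n`. On the window `j ≤ m₂` the choice of `m₂`
forces `λ_{j-1} ≥ l_*`, so the weight `(1 + λ_{j-1}^{-γ})⁴` is at most `16 (log n)^{12γ}`.
Hence every summand is `O((log n)^{12γ} n^{-3/2})`. The window `[m₁, m₂]` has at most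
`n (l^*/λ₀)^{2/(μ+1)} + 1 ≍ n^{μ/(μ+1)} (log n)^{6/(μ+1)}` terms, and `n^{2β} = n^{μ/(μ+1)}`,
so the whole expression is `O(n^{(μ-3)/(2(μ+1))} · polylog n)`, which tends to `0` as `μ < 3`.
-/

open Filter Real Finset Topology

lemma rpow_sub_rpow_le_mul_sub {p a b : ℝ} (hp : 1 ≤ p) (hb : 0 ≤ b) (hba : b ≤ a) (ha : a ≤ 1) :
    a ^ p - b ^ p ≤ p * (a - b) := by
  rcases hba.eq_or_lt with rfl | hlt
  · simp
  obtain ⟨c, hc, hderiv⟩ := exists_hasDerivAt_eq_slope (fun x => x ^ p)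
    (fun x => p * x ^ (p - 1)) hlt
    (fun x _ => (continuousAt_rpow_const x p (Or.inr (by linarith))).continuousWithinAt)
    (fun x _ => hasDerivAt_rpow_const (Or.inr hp))
  have hc1 : c ^ (p - 1) ≤ 1 := rpow_le_one (hb.trans hc.1.le) (hc.2.le.trans ha) (by linarith)
  rw [eq_div_iff (by linarith)] at hderiv
  rw [← hderiv, mul_right_comm]
  exact mul_le_of_le_one_right (by nlinarith) hc1

lemma one_sub_div_rpow_step_mem_Icc {p : ℝ} (hp : 1 ≤ p) {n j : ℕ} (hj : j ≤ n) :
    (1 - ((j - 1 : ℕ) : ℝ) / n) ^ p - (1 - (j : ℝ) / n) ^ p ∈ Set.Icc 0 (p / n) := by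
  obtain _ | k := j
  · simp [div_nonneg (by linarith : (0:ℝ) ≤ p)]
  have hn : (0 : ℝ) < n := by exact_mod_cast (Nat.succ_pos k).trans_le hj
  have hb : 0 ≤ 1 - ((k + 1 : ℕ) : ℝ) / n := by
    rw [sub_nonneg, div_le_one hn]; exact_mod_cast hj
  have hstep : (1 - (k : ℝ) / n) - (1 - ((k + 1 : ℕ) : ℝ) / n) = 1 / n := by
    push_cast; ring
  have hba : 1 - ((k + 1 : ℕ) : ℝ) / n ≤ 1 - (k : ℝ) / n := by
    have : 0 ≤ 1 / (n : ℝ) := by positivity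
    linarith
  have ha : 1 - (k : ℝ) / n ≤ 1 := by
    have : 0 ≤ (k : ℝ) / n := by positivity
    linarith
  simp only [Nat.add_sub_cancel, Set.mem_Icc, sub_nonneg]
  refine ⟨rpow_le_rpow hb hba (by linarith), ?_⟩
  have := rpow_sub_rpow_le_mul_sub hp hb hba ha
  rwa [hstep, mul_one_div] at this

lemma le_one_sub_div_of_lt_sub_floor {n k : ℕ} {y : ℝ} (h : k < n - ⌊n * y⌋₊) :
    y ≤ 1 - k / n := by
  have hn : (0 : ℝ) < n := by exact_mod_cast (Nat.zero_lt_of_lt h).trans_le (Nat.sub_le _ _)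
  have hfloor : (⌊n * y⌋₊ : ℝ) + k + 1 ≤ n := by exact_mod_cast (by omega : ⌊n * y⌋₊ + k + 1 ≤ n)
  have hlt := Nat.lt_floor_add_one ((n : ℝ) * y)
  rw [le_sub_iff_add_le, show y + k / n = (n * y + k) / n by field_simp, div_le_one hn]
  linarith

lemma card_Icc_sub_sub_le (n a b : ℕ) : #(Icc (n - a) (n - b)) ≤ a + 1 := by
  rw [Nat.card_Icc]; omega

lemma one_le_log_natCast {n : ℕ} (hn : 3 ≤ n) : 1 ≤ log n := by
  rw [le_log_iff_exp_le (by positivity)]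
  calc exp 1 ≤ 3 := (exp_one_lt_d9.trans_le (by norm_num)).le
    _ ≤ n := by exact_mod_cast hn

lemma tendsto_natCast_rpow_mul_log_rpow {e : ℝ} (he : e < 0) (M : ℝ) :
    Tendsto (fun n : ℕ => (n : ℝ) ^ e * log n ^ M) atTop (𝓝 0) := by
  have h := ((isLittleO_log_rpow_rpow_atTop M (neg_pos.2 he)).tendsto_div_nhds_zero).comp
    tendsto_natCast_atTop_atTop
  refine h.congr' ((eventually_gt_atTop 0).mono fun n hn => ?_)
  simp [rpow_neg (Nat.cast_nonneg n), div_eq_mul_inv, mul_comm]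

lemma cube_add_sq_add_one_add_pow_four_mul_le {x y z a b N Λ : ℝ} (hx0 : 0 ≤ x)
    (hx : x ≤ a * N) (hy0 : 0 ≤ y) (hy : y ≤ b * N ^ 2) (hz0 : 0 ≤ z) (hz : z ≤ Λ)
    (hΛ : 1 ≤ Λ) (hN0 : 0 ≤ N) (hN1 : N ≤ 1) :
    x ^ 3 + y ^ 2 + (1 + z) ^ 4 * x ^ 4 ≤ (a ^ 3 + b ^ 2 + 16 * a ^ 4) * Λ ^ 4 * N ^ 3 := by
  have hX : 0 ≤ a * N := hx0.trans hx
  have h1 : x ^ 3 ≤ (a * N) ^ 3 := by gcongr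
  have h2 : y ^ 2 ≤ (b * N ^ 2) ^ 2 := by gcongr
  have h3 : (1 + z) ^ 4 * x ^ 4 ≤ (2 * Λ) ^ 4 * (a * N) ^ 4 := by
    gcongr
    linarith
  have hΛ4 : 1 ≤ Λ ^ 4 := one_le_pow₀ hΛ
  have e1 : 0 ≤ (a * N) ^ 3 * (Λ ^ 4 - 1) := mul_nonneg (by positivity) (by linarith)
  have e2 : 0 ≤ b ^ 2 * N ^ 3 * (Λ ^ 4 - N) := mul_nonneg (by positivity) (by linarith)
  have e3 : 0 ≤ 16 * a ^ 4 * Λ ^ 4 * N ^ 3 * (1 - N) := mul_nonneg (by positivity) (by linarith)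
  nlinarith

lemma tendsto_rpow_mul_window_bound {s : ℝ} (hs : s < 3 / 4) (K C M₁ M₂ : ℝ) :
    Tendsto (fun n : ℕ => (n : ℝ) ^ s *
      ((K * n ^ s * log n ^ M₁ + 1) * (C * log n ^ M₂ * n ^ (-(3 / 2) : ℝ)))) atTop (𝓝 0) := by
  have h := ((tendsto_natCast_rpow_mul_log_rpow (by linarith : 2 * s - 3 / 2 < 0)
    (M₁ + M₂)).const_mul (C * K)).add
    ((tendsto_natCast_rpow_mul_log_rpow (by linarith : s - 3 / 2 < 0) M₂).const_mul C)
  rw [mul_zero, mul_zero, add_zero] at h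
  refine h.congr' ((eventually_ge_atTop 2).mono fun n hn => ?_)
  have hn' : (0 : ℝ) < n := by positivity
  have hL : 0 < log n := log_pos (by exact_mod_cast hn)
  simp only [rpow_add hL, rpow_sub hn', show 2 * s = s + s by ring, rpow_add hn',
    rpow_neg hn'.le]
  field_simp

lemma lStar_nonneg (n : ℕ) : 0 ≤ lStar n :=
  inv_nonneg.2 (pow_nonneg (log_natCast_nonneg n) 3)

lemma lStar_rpow_neg (n : ℕ) (γ : ℝ) : lStar n ^ (-γ) = log n ^ (3 * γ) := by
  have hL := log_natCast_nonneg n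
  rw [lStar, inv_rpow (by positivity), rpow_neg (by positivity), inv_inv, ← rpow_natCast,
    ← rpow_mul hL, Nat.cast_ofNat]

noncomputable def remainderTerm (μ ρ γ : ℝ) (n j : ℕ) : ℝ :=
  dLam μ ρ n j ^ 3 + dT μ n j ^ 2 + (1 + lamJ μ ρ n (j - 1) ^ (-γ)) ^ 4 * dLam μ ρ n j ^ 4

section Estimates

variable {μ ρ γ : ℝ} {n j : ℕ}

lemma lam0_pos (hμ : 0 < μ) (hρ : 0 < ρ) (hn : 0 < n) : 0 < lam0 μ ρ n := by
  unfold lam0; positivity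

lemma lam0_nonneg (hμ : 0 ≤ μ) (hρ : 0 ≤ ρ) : 0 ≤ lam0 μ ρ n := by
  unfold lam0; positivity

lemma dLam_eq : dLam μ ρ n j = lam0 μ ρ n *
    ((1 - ((j - 1 : ℕ) : ℝ) / n) ^ ((μ + 1) / 2) - (1 - (j : ℝ) / n) ^ ((μ + 1) / 2)) := by
  unfold dLam lamJ; ring

lemma dT_eq :
    dT μ n j = (1 - ((j - 1 : ℕ) : ℝ) / n) ^ μ - (1 - (j : ℝ) / n) ^ μ := by
  unfold dT tradeT; ring

lemma dLam_nonneg (hμ : 1 ≤ μ) (hρ : 0 ≤ ρ) (hj : j ≤ n) : 0 ≤ dLam μ ρ n j := by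
  rw [dLam_eq]
  exact mul_nonneg (lam0_nonneg (by linarith) hρ)
    (one_sub_div_rpow_step_mem_Icc (by linarith) hj).1

lemma dLam_le (hμ : 1 ≤ μ) (hρ : 0 ≤ ρ) (hj : j ≤ n) :
    dLam μ ρ n j ≤ ρ * √μ * (√n)⁻¹ := calc
  dLam μ ρ n j ≤ lam0 μ ρ n * ((μ + 1) / 2 / n) := by
    rw [dLam_eq]
    exact mul_le_mul_of_nonneg_left (one_sub_div_rpow_step_mem_Icc (by linarith) hj).2
      (lam0_nonneg (by linarith) hρ)
  _ = ρ * √μ * (√n / n) := by unfold lam0; field_simp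
  _ = ρ * √μ * (√n)⁻¹ := by rw [sqrt_div_self]

lemma dT_nonneg (hμ : 1 ≤ μ) (hj : j ≤ n) : 0 ≤ dT μ n j := by
  rw [dT_eq]; exact (one_sub_div_rpow_step_mem_Icc hμ hj).1

lemma dT_le (hμ : 1 ≤ μ) (hj : j ≤ n) : dT μ n j ≤ μ * (√n)⁻¹ ^ 2 := by
  rw [inv_pow, sq_sqrt (Nat.cast_nonneg n), ← div_eq_mul_inv, dT_eq]
  exact (one_sub_div_rpow_step_mem_Icc hμ hj).2

lemma le_lamJ_of_rpow_le {l : ℝ} {k : ℕ} (hμ : 0 < μ + 1) (hl : 0 ≤ l)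
    (hlam0 : 0 < lam0 μ ρ n) (h : (l / lam0 μ ρ n) ^ (2 / (μ + 1)) ≤ 1 - (k : ℝ) / n) :
    l ≤ lamJ μ ρ n k := calc
  l = lam0 μ ρ n * ((l / lam0 μ ρ n) ^ (2 / (μ + 1))) ^ (2 / (μ + 1))⁻¹ := by
    rw [rpow_rpow_inv (div_nonneg hl hlam0.le) (by positivity), mul_div_cancel₀ _ hlam0.ne']
  _ ≤ lamJ μ ρ n k := by
    rw [lamJ, inv_div]
    gcongr

lemma mUp_le : mUp μ ρ n ≤ n := Nat.sub_le _ _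

lemma lStar_le_lamJ_of_lt_mUp (hμ : 0 < μ) (hρ : 0 < ρ) {k : ℕ} (hk : k < mUp μ ρ n) :
    lStar n ≤ lamJ μ ρ n k :=
  le_lamJ_of_rpow_le (by linarith) (lStar_nonneg n)
    (lam0_pos hμ hρ (Nat.zero_lt_of_lt (hk.trans_le mUp_le)))
    (le_one_sub_div_of_lt_sub_floor hk)

lemma natCast_mul_lUpStar_div_lam0_rpow (hμ : 0 < μ) (hρ : 0 < ρ) (hn : 0 < n) :
    n * (lUpStar n / lam0 μ ρ n) ^ (2 / (μ + 1)) =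
      (ρ * (2 * √μ / (μ + 1))) ^ (-(2 / (μ + 1))) * n ^ (μ / (μ + 1)) *
        log n ^ (6 / (μ + 1)) := by
  have hn' : (0 : ℝ) < n := by exact_mod_cast hn
  have hc : 0 < ρ * (2 * √μ / (μ + 1)) := by positivity
  have hL := log_natCast_nonneg n
  have hlam0 : lam0 μ ρ n = ρ * (2 * √μ / (μ + 1)) * (n : ℝ) ^ (1 / 2 : ℝ) := by
    rw [lam0, sqrt_eq_rpow]; ring
  have hexp : μ / (μ + 1) = 1 - 1 / 2 * (2 / (μ + 1)) := by field_simp; ring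
  rw [hlam0, lUpStar, div_rpow (by positivity) (by positivity), mul_rpow hc.le (by positivity),
    ← rpow_natCast, ← rpow_mul hL, ← rpow_mul hn'.le, rpow_neg hc.le, hexp, rpow_sub hn',
    rpow_one]
  have : (0 : ℝ) < n ^ (1 / 2 * (2 / (μ + 1))) := by positivity
  field_simp
  ring_nf

lemma card_window_le (hμ : 0 < μ) (hρ : 0 < ρ) (hn : 0 < n) :
    (#(Icc (mLow μ ρ n) (mUp μ ρ n)) : ℝ) ≤
      (ρ * (2 * √μ / (μ + 1))) ^ (-(2 / (μ + 1))) * n ^ (μ / (μ + 1)) *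
        log n ^ (6 / (μ + 1)) + 1 := by
  rw [← natCast_mul_lUpStar_div_lam0_rpow hμ hρ hn]
  have hX : 0 ≤ n * (lUpStar n / lam0 μ ρ n) ^ (2 / (μ + 1)) :=
    mul_nonneg (Nat.cast_nonneg n) (rpow_nonneg (div_nonneg
      (pow_nonneg (log_natCast_nonneg n) 3) (lam0_nonneg hμ.le hρ.le)) _)
  calc (#(Icc (mLow μ ρ n) (mUp μ ρ n)) : ℝ)
      ≤ (⌊n * (lUpStar n / lam0 μ ρ n) ^ (2 / (μ + 1))⌋₊ + 1 : ℕ) := by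
        exact_mod_cast card_Icc_sub_sub_le _ _ _
    _ ≤ _ := by push_cast; gcongr; exact Nat.floor_le hX

lemma remainderTerm_nonneg (hμ : 1 ≤ μ) (hρ : 0 ≤ ρ) (hj : j ≤ n) :
    0 ≤ remainderTerm μ ρ γ n j := by
  have := dLam_nonneg hμ hρ hj
  unfold remainderTerm; positivity

lemma remainderTerm_le (hμ : 1 ≤ μ) (hρ : 0 < ρ) (hγ : 0 < γ) (hn : 3 ≤ n)
    (hj : j ≤ mUp μ ρ n) :
    remainderTerm μ ρ γ n j ≤
      ((ρ * √μ) ^ 3 + μ ^ 2 + 16 * (ρ * √μ) ^ 4) * log n ^ (12 * γ) * n ^ (-(3 / 2) : ℝ) := by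
  obtain rfl | hj0 := j.eq_zero_or_pos
  -- `0 - 1 = 0` in `ℕ`, so `Δλ_0 = Δt_0 = 0`.
  · have : 0 ≤ log n ^ (12 * γ) := rpow_nonneg (log_natCast_nonneg n) _
    simp only [remainderTerm, dLam, dT, zero_tsub, sub_self, ne_eq, OfNat.ofNat_ne_zero,
      not_false_eq_true, zero_pow, add_zero, mul_zero]
    positivity
  have hjn := hj.trans mUp_le
  have hL := one_le_log_natCast hn
  have hlStar : lStar n ≤ lamJ μ ρ n (j - 1) :=
    lStar_le_lamJ_of_lt_mUp (by linarith) hρ (by omega)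
  have hlam : lamJ μ ρ n (j - 1) ^ (-γ) ≤ log n ^ (3 * γ) := by
    rw [← lStar_rpow_neg]
    exact rpow_le_rpow_of_nonpos (inv_pos.2 (by positivity)) hlStar (by linarith)
  have hN1 : (√n)⁻¹ ≤ 1 :=
    inv_le_one_of_one_le₀ (one_le_sqrt.2 (by exact_mod_cast (by omega : 1 ≤ n)))
  have key := cube_add_sq_add_one_add_pow_four_mul_le (dLam_nonneg hμ hρ.le hjn)
    (dLam_le hμ hρ.le hjn) (dT_nonneg hμ hjn) (dT_le hμ hjn)
    (rpow_nonneg ((lStar_nonneg n).trans hlStar) _) hlam (one_le_rpow hL (by positivity))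
    (by positivity) hN1
  have hΛ : (log n ^ (3 * γ)) ^ 4 = log n ^ (12 * γ) := by
    rw [← rpow_mul_natCast (by linarith)]; ring_nf
  have hN : (√n)⁻¹ ^ 3 = (n : ℝ) ^ (-(3 / 2) : ℝ) := by
    rw [sqrt_eq_rpow, ← rpow_neg (Nat.cast_nonneg _), ← rpow_mul_natCast (Nat.cast_nonneg _)]
    norm_num
  rwa [← hΛ, ← hN]

lemma sum_remainderTerm_le (hμ : 1 ≤ μ) (hρ : 0 < ρ) (hγ : 0 < γ) (hn : 3 ≤ n) :
    ∑ j ∈ Icc (mLow μ ρ n) (mUp μ ρ n), remainderTerm μ ρ γ n j ≤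
      ((ρ * (2 * √μ / (μ + 1))) ^ (-(2 / (μ + 1))) * n ^ (μ / (μ + 1)) *
          log n ^ (6 / (μ + 1)) + 1) *
        (((ρ * √μ) ^ 3 + μ ^ 2 + 16 * (ρ * √μ) ^ 4) * log n ^ (12 * γ) * n ^ (-(3 / 2) : ℝ)) := by
  refine (sum_le_card_nsmul _ _ _ fun j hj =>
    remainderTerm_le hμ hρ hγ hn (mem_Icc.1 hj).2).trans ?_
  rw [nsmul_eq_mul]
  gcongr
  exact card_window_le (by linarith) hρ (by omega)

end Estimates

theorem sum_dLam_negligible (μ ρ γ : ℝ) (hμ1 : 1 ≤ μ) (hμ2 : μ < 2) (hρ : 0 < ρ)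
    (hγ : 0 < γ) :
    Filter.Tendsto
      (fun n : ℕ => (n : ℝ) ^ (2 * (μ / (2 * (μ + 1)))) *
        ∑ j ∈ Finset.Icc (mLow μ ρ n) (mUp μ ρ n),
          ((dLam μ ρ n j) ^ 3 + (dT μ n j) ^ 2
            + (1 + lamJ μ ρ n (j - 1) ^ (-γ)) ^ 4 * (dLam μ ρ n j) ^ 4))
      Filter.atTop (nhds 0) := by
  change Tendsto (fun n : ℕ => (n : ℝ) ^ (2 * (μ / (2 * (μ + 1)))) *
    ∑ j ∈ Icc (mLow μ ρ n) (mUp μ ρ n), remainderTerm μ ρ γ n j) atTop (𝓝 0)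
  have hβ : 2 * (μ / (2 * (μ + 1))) = μ / (μ + 1) := by field_simp
  have hs : μ / (μ + 1) < 3 / 4 := by rw [div_lt_iff₀ (by linarith)]; linarith
  rw [hβ]
  refine squeeze_zero' (Eventually.of_forall fun n => mul_nonneg (by positivity)
    (sum_nonneg fun j hj => remainderTerm_nonneg hμ1 hρ.le ((mem_Icc.1 hj).2.trans mUp_le)))
    ((eventually_ge_atTop 3).mono fun n hn =>
      mul_le_mul_of_nonneg_left (sum_remainderTerm_le hμ1 hρ hγ hn) (by positivity))
    (tendsto_rpow_mul_window_bound hs _ _ _ _)
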